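/- arXiv:2408.03711 — 2 statements merged into one kernel-verified Lean document; each statement's English description precedes it below -/
import Mathlib

section
/- Let m ≥ 1 be an integer, let φ : 𝔻 → 𝔻 be holomorphic, let c : 𝔻² → ℂ be holomorphic, and let f : 𝔻² → ℂ be holomorphic with (∂₁^j f)(z, z) = 0 for all z ∈ 𝔻 and all 0 ≤ j ≤ m − 1. Then for every z ∈ 𝔻, ∂₁^m ( (z₁,z₂) ↦ c(z₁,z₂) · f(φ(z₁), φ(z₂)) )(z, z) = c(z, z) · (φ'(z))^m · (∂₁^m f)(φ(z), φ(z)). (The key computation in Proposition 2.7 identifying the cocycle of the reduced representation as c_m(φ, z) = c(φ,(z,z))·(φ'(z))^m.) -/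
/-! Restricted to the slice `z₂ = z`, the function is `u ↦ C u * F (φ u)` with `C = c(·, z)` and
`F = f(·, φ z)`. Differentiating once gives `C' · F ∘ φ + (C φ') · F' ∘ φ`; by induction on `m`
only the term in which every derivative falls on `F` survives, because all lower derivatives of
`F` vanish at `φ z`. -/

open Metric Set

/-- The partial derivative of a function of two complex variables with respect to
the first variable. -/
noncomputable def d1 (f : ℂ × ℂ → ℂ) : ℂ × ℂ → ℂ :=
  fun p => deriv (fun z => f (z, p.2)) p.1

open Filter Topology

section OneVariable

variable {𝕜 : Type*} [NontriviallyNormedField 𝕜]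

theorem ContDiffAt.eventually_differentiableAt {E F : Type*} [NormedAddCommGroup E]
    [NormedSpace 𝕜 E] [NormedAddCommGroup F] [NormedSpace 𝕜 F] {f : E → F} {x : E} {m : ℕ}
    (h : ContDiffAt 𝕜 (m + 1 : ℕ) f x) : ∀ᶠ y in 𝓝 x, DifferentiableAt 𝕜 f y :=
  (h.eventually (by simp)).mono fun _ hy => hy.differentiableAt (by simp)

theorem deriv_mul_comp_eventuallyEq {C φ F : 𝕜 → 𝕜} {z : 𝕜}
    (hC : ∀ᶠ u in 𝓝 z, DifferentiableAt 𝕜 C u) (hφ : ∀ᶠ u in 𝓝 z, DifferentiableAt 𝕜 φ u)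
    (hF : ∀ᶠ u in 𝓝 z, DifferentiableAt 𝕜 F (φ u)) :
    deriv (fun u => C u * F (φ u)) =ᶠ[𝓝 z]
      fun u => deriv C u * F (φ u) + (C u * deriv φ u) * deriv F (φ u) := by
  filter_upwards [hC, hφ, hF] with u hCu hφu hFu
  exact (hCu.hasDerivAt.mul (hFu.hasDerivAt.comp u hφu.hasDerivAt)).deriv.trans
    (by rw [Function.comp_apply]; ring)

theorem iteratedDeriv_mul_comp_of_iteratedDeriv_eq_zero {C φ F : 𝕜 → 𝕜} {z : 𝕜} (m : ℕ)
    (hC : ContDiffAt 𝕜 m C z) (hφ : ContDiffAt 𝕜 m φ z) (hF : ContDiffAt 𝕜 m F (φ z))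
    (hvanish : ∀ j < m, iteratedDeriv j F (φ z) = 0) :
    iteratedDeriv m (fun u => C u * F (φ u)) z
      = C z * deriv φ z ^ m * iteratedDeriv m F (φ z) := by
  induction m generalizing C F with
  | zero => simp
  | succ m ih =>
    have hsucc : ((m : ℕ) : WithTop ℕ∞) + 1 ≤ ((m + 1 : ℕ) : WithTop ℕ∞) := by simp
    have hle : ((m : ℕ) : WithTop ℕ∞) ≤ ((m + 1 : ℕ) : WithTop ℕ∞) := by simp
    have hC' := hC.derivWithin hsucc
    have hφ' := hφ.derivWithin hsucc
    have hF' := hF.derivWithin hsucc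
    have hCm := hC.of_le hle
    have hφm := hφ.of_le hle
    have hFm := hF.of_le hle
    have hderiv := deriv_mul_comp_eventuallyEq hC.eventually_differentiableAt
      hφ.eventually_differentiableAt
      (hφ.continuousAt.eventually hF.eventually_differentiableAt)
    have hfirst : iteratedDeriv m (fun u => deriv C u * F (φ u)) z
        = deriv C z * deriv φ z ^ m * iteratedDeriv m F (φ z) :=
      ih hC' hφm hFm fun j hj => hvanish j (by omega)
    have hsecond : iteratedDeriv m (fun u => (C u * deriv φ u) * deriv F (φ u)) z
        = (C z * deriv φ z) * deriv φ z ^ m * iteratedDeriv (m + 1) F (φ z) := by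
      rw [iteratedDeriv_succ']
      exact ih (hCm.mul hφ') hφm hF' fun j hj => by
        rw [← iteratedDeriv_succ']; exact hvanish (j + 1) (by omega)
    have hFφ : ContDiffAt 𝕜 m (fun u => F (φ u)) z := hFm.comp z hφm
    have hF'φ : ContDiffAt 𝕜 m (fun u => deriv F (φ u)) z := hF'.comp z hφm
    rw [iteratedDeriv_succ', hderiv.iteratedDeriv_eq,
      iteratedDeriv_fun_add (hC'.mul hFφ) ((hCm.mul hφ').mul hF'φ), hfirst, hsecond,
      hvanish m (by omega)]
    ring

end OneVariable

theorem iterate_d1_apply (n : ℕ) (F : ℂ × ℂ → ℂ) (a b : ℂ) :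
    d1^[n] F (a, b) = iteratedDeriv n (fun u => F (u, b)) a := by
  induction n generalizing F with
  | zero => simp
  | succ n ih =>
    rw [Function.iterate_succ_apply, ih, iteratedDeriv_succ']
    rfl

theorem DifferentiableOn.contDiffAt_slice_fst {g : ℂ × ℂ → ℂ} {s t : Set ℂ} (hs : IsOpen s)
    (hg : DifferentiableOn ℂ g (s ×ˢ t)) {a b : ℂ} (ha : a ∈ s) (hb : b ∈ t) (n : WithTop ℕ∞) :
    ContDiffAt ℂ n (fun u => g (u, b)) a := by
  have hslice : DifferentiableOn ℂ (fun u => g (u, b)) s :=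
    hg.comp (differentiableOn_id.prodMk (differentiableOn_const b)) fun _ hu => ⟨hu, hb⟩
  exact (hslice.analyticAt (hs.mem_nhds ha)).contDiffAt

theorem stmt9_general (m : ℕ) (φ : ℂ → ℂ) (c f : ℂ × ℂ → ℂ)
    (hφmap : MapsTo φ (ball (0 : ℂ) 1) (ball (0 : ℂ) 1))
    (hφ : DifferentiableOn ℂ φ (ball (0 : ℂ) 1))
    (hc : DifferentiableOn ℂ c (ball (0 : ℂ) 1 ×ˢ ball (0 : ℂ) 1))
    (hf : DifferentiableOn ℂ f (ball (0 : ℂ) 1 ×ˢ ball (0 : ℂ) 1))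
    (hvanish : ∀ j < m, ∀ z ∈ ball (0 : ℂ) 1, d1^[j] f (z, z) = 0) :
    ∀ z ∈ ball (0 : ℂ) 1,
      d1^[m] (fun p => c p * f (φ p.1, φ p.2)) (z, z)
        = c (z, z) * (deriv φ z) ^ m * d1^[m] f (φ z, φ z) := by
  intro z hz
  have hφz : φ z ∈ ball (0 : ℂ) 1 := hφmap hz
  rw [iterate_d1_apply, iterate_d1_apply]
  exact iteratedDeriv_mul_comp_of_iteratedDeriv_eq_zero (F := fun v => f (v, φ z)) m
    (hc.contDiffAt_slice_fst isOpen_ball hz hz _)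
    (hφ.analyticAt (isOpen_ball.mem_nhds hz)).contDiffAt
    (hf.contDiffAt_slice_fst isOpen_ball hφz hφz _)
    fun j hj => by rw [← iterate_d1_apply]; exact hvanish j hj _ hφz

/-- the key computation in Proposition 2.7: if the first `m - 1` partial
derivatives `∂₁^j f` vanish on the diagonal, then
`∂₁^m ((z₁,z₂) ↦ c(z₁,z₂)·f(φ(z₁),φ(z₂)))(z,z) = c(z,z)·(φ'(z))^m·(∂₁^m f)(φ(z),φ(z))`. -/
theorem stmt9 (m : ℕ) (hm : 1 ≤ m) (φ : ℂ → ℂ) (c f : ℂ × ℂ → ℂ)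
    (hφmap : MapsTo φ (ball (0 : ℂ) 1) (ball (0 : ℂ) 1))
    (hφ : DifferentiableOn ℂ φ (ball (0 : ℂ) 1))
    (hc : DifferentiableOn ℂ c (ball (0 : ℂ) 1 ×ˢ ball (0 : ℂ) 1))
    (hf : DifferentiableOn ℂ f (ball (0 : ℂ) 1 ×ˢ ball (0 : ℂ) 1))
    (hvanish : ∀ j < m, ∀ z ∈ ball (0 : ℂ) 1, d1^[j] f (z, z) = 0) :
    ∀ z ∈ ball (0 : ℂ) 1,
      d1^[m] (fun p => c p * f (φ p.1, φ p.2)) (z, z)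
        = c (z, z) * (deriv φ z) ^ m * d1^[m] f (φ z, φ z) :=
  stmt9_general m φ c f hφmap hφ hc hf hvanish
end

section
/- Let n ≥ 0 be an integer and let f : 𝔻² → ℂ be holomorphic with (∂₁^i f)(z, z) = 0 for all z ∈ 𝔻 and all 0 ≤ i ≤ n. Then for j = 1, 2 the holomorphic function (z₁, z₂) ↦ z_j · f(z₁, z₂) also satisfies (∂₁^i (z_j · f))(z, z) = 0 for all z ∈ 𝔻 and all 0 ≤ i ≤ n. (Lemma 3.3: each M_n is invariant under the multiplication operators M_{z₁} and M_{z₂}.) -/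
/-!
On the slice `ζ ↦ f (ζ, z)`, multiplying by `z₂` is multiplying by the constant `z`, which commutes
with `∂₁`, while multiplying by `z₁` obeys the Leibniz rule
`∂₁^i (z₁ f) = i ∂₁^(i-1) f + z₁ ∂₁^i f`. Either way `∂₁^i` of the product at `(z, z)` is a
combination of the values `∂₁^k f (z, z)` with `k ≤ i`, all of which vanish.
-/

open Metric Set

theorem iteratedDeriv_fun_id_smul {𝕜 F : Type*} [NontriviallyNormedField 𝕜]
    [NormedAddCommGroup F] [NormedSpace 𝕜 F] {n : ℕ} {g : 𝕜 → F} {x : 𝕜}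
    (hg : ContDiffAt 𝕜 n g x) :
    iteratedDeriv n (fun y => y • g y) x
      = (n : 𝕜) • iteratedDeriv (n - 1) g x + x • iteratedDeriv n g x := by
  have leibniz := iteratedDerivWithin_smul (mem_univ x) uniqueDiffOn_univ
    (contDiffAt_id (𝕜 := 𝕜)).contDiffWithinAt hg.contDiffWithinAt
  simp only [iteratedDerivWithin_univ] at leibniz
  change iteratedDeriv n ((id : 𝕜 → 𝕜) • g) x = _
  rw [leibniz]
  rcases n with _ | m
  · simp
  · rw [Finset.sum_range_succ', Finset.sum_range_succ', Finset.sum_eq_zero]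
    · simp [iteratedDeriv_id, add_comm, ← Nat.cast_smul_eq_nsmul 𝕜]
    · intro i _
      simp [iteratedDeriv_id]

theorem d1_iterate_apply (F : ℂ × ℂ → ℂ) (i : ℕ) (z w : ℂ) :
    d1^[i] F (z, w) = iteratedDeriv i (fun ζ => F (ζ, w)) z := by
  induction i generalizing z with
  | zero => simp
  | succ k ih =>
    rw [Function.iterate_succ_apply', iteratedDeriv_succ]
    show deriv (fun ζ => d1^[k] F (ζ, w)) z = _
    exact congrArg (deriv · z) (funext ih)

/-- Lemma 3.3: if the first `n` partial derivatives `∂₁^i f` of a holomorphic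
function on the bidisc vanish on the diagonal, the same holds for `z₁·f` and `z₂·f`;
that is, each `M_n` is invariant under the multiplication operators `M_{z₁}` and `M_{z₂}`. -/
theorem stmt16 (n : ℕ) (f : ℂ × ℂ → ℂ)
    (hf : DifferentiableOn ℂ f (ball (0 : ℂ) 1 ×ˢ ball (0 : ℂ) 1))
    (hvanish : ∀ i ≤ n, ∀ z ∈ ball (0 : ℂ) 1, d1^[i] f (z, z) = 0) :
    ∀ i ≤ n, ∀ z ∈ ball (0 : ℂ) 1,
      d1^[i] (fun p => p.1 * f p) (z, z) = 0 ∧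
      d1^[i] (fun p => p.2 * f p) (z, z) = 0 := by
  intro i hi z hz
  set g : ℂ → ℂ := fun ζ => f (ζ, z)
  have hg : ContDiffAt ℂ i g z := by
    have hg_holo : DifferentiableOn ℂ g (ball 0 1) :=
      hf.comp (differentiableOn_id.prodMk (differentiableOn_const z)) fun ζ hζ => ⟨hζ, hz⟩
    exact (hg_holo.contDiffOn isOpen_ball).contDiffAt (isOpen_ball.mem_nhds hz)
  have hg_vanish : ∀ k ≤ n, iteratedDeriv k g z = 0 := fun k hk => by
    simpa only [d1_iterate_apply] using hvanish k hk z hz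
  rw [d1_iterate_apply, d1_iterate_apply]
  refine ⟨?_, ?_⟩
  · calc iteratedDeriv i (fun ζ => ζ • g ζ) z
        = (i : ℂ) • iteratedDeriv (i - 1) g z + z • iteratedDeriv i g z :=
          iteratedDeriv_fun_id_smul hg
      _ = 0 := by rw [hg_vanish i hi, hg_vanish (i - 1) (by omega), smul_zero, smul_zero, add_zero]
  · calc iteratedDeriv i (fun ζ => z * g ζ) z = z * iteratedDeriv i g z :=
          iteratedDeriv_const_mul_field z g
      _ = 0 := by rw [hg_vanish i hi, mul_zero]
end
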